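/- arXiv:1608.06854 — 2 statements merged into one kernel-verified Lean document; each statement's English description precedes it below -/
import Mathlib

section
/- For every ε > 0 there exists a constant C = C(ε) > 0 such that for every positive integer L and every real Y ≥ 1, Σ_{ℓ ≤ Y, ℓ | L^∞} (ℓ / ν(ℓ)²) · (Σ_{d | ℓ} c_ℓ(d) · √d)² ≤ C · Y^ε · τ(L), where the outer sum is over positive integers ℓ ≤ Y all of whose prime factors divide L. -/
/-- The Chebyshev coefficients: `c_{j,n} = C(n, (n+j)/2) - C(n, (n+j)/2 + 1)` when `n - j`
is even, and `c_{j,n} = 0` when `n - j` is odd (note `n - j` and `n + j` have the same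
parity). -/
noncomputable def chebCoeff (j n : ℕ) : ℝ :=
  if (n + j) % 2 = 0 then
    (n.choose ((n + j) / 2) : ℝ) - (n.choose ((n + j) / 2 + 1) : ℝ)
  else 0

/-- For `d ∣ ℓ`, `c_ℓ(d) = ∏_{p ∣ ℓ} c_{v_p(d), v_p(ℓ)}`, where `v_p` is the `p`-adic
valuation. -/
noncomputable def chebCoeffProd (ℓ d : ℕ) : ℝ :=
  ∏ p ∈ ℓ.primeFactors, chebCoeff (d.factorization p) (ℓ.factorization p)

/-- `ν` is the completely multiplicative function with `ν(p) = p + 1` for every prime `p`,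
i.e. `ν(ℓ) = ∏_p (p+1)^{v_p(ℓ)}`. -/
def nuCM (ℓ : ℕ) : ℕ := ∏ p ∈ ℓ.primeFactors, (p + 1) ^ ℓ.factorization p

/-!
Every summand is at most `1`. Indeed `√ℓ · ∑_{d ∣ ℓ} c_ℓ(d) √d` factors over `p ∣ ℓ` into
`∑_j c_{j,n} √p^{n+j}` with `n = v_p(ℓ)`; only `j ≡ n (mod 2)` contribute, and as
`c_{j,n} ≤ C(n, (n+j)/2)` this is at most `∑_k C(n,k) p^k = (p+1)^n`. Hence the sum is at most the
number of `ℓ ≤ Y` with `ℓ ∣ L^∞`, which Rankin's trick bounds by `Y^ε ∏_{p ∣ L} (1 - p^{-ε})⁻¹`.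
A factor is at most `2` once `p ≥ 2^{1/ε}` and at most `(1 - 2^{-ε})⁻¹` otherwise, so the product
is at most `C(ε) 2^{ω(L)} ≤ C(ε) τ(L)`.
-/

open Finset

namespace Nat

theorem prod_primeFactors_pow_factorization_of_dvd {n d : ℕ} (hn : n ≠ 0) (hd : d ∣ n) :
    ∏ p ∈ n.primeFactors, p ^ d.factorization p = d := by
  conv_rhs => rw [← prod_factorization_pow_eq_self (ne_zero_of_dvd_ne_zero hn hd)]
  exact (Finsupp.prod_of_support_subset _ (by simpa using primeFactors_mono hd hn) _
    fun _ _ => pow_zero _).symm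

/-- The exponent vectors `(v_p(d))_{p ∣ n}` of the divisors `d ∣ n` are distinct and lie in the box
`∏_p [0, v_p(n)]`, which has exactly `τ(n)` points. -/
theorem sum_divisors_prod_primeFactors {R : Type*} [CommSemiring R] {n : ℕ} (hn : n ≠ 0)
    (g : ℕ → ℕ → R) :
    ∑ d ∈ n.divisors, ∏ p ∈ n.primeFactors, g p (d.factorization p) =
      ∏ p ∈ n.primeFactors, ∑ j ∈ range (n.factorization p + 1), g p j := by
  let e : ℕ → ∀ p ∈ n.primeFactors, ℕ := fun d p _ => d.factorization p
  have he : Set.InjOn e n.divisors := fun d hd d' hd' h => by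
    rw [← prod_primeFactors_pow_factorization_of_dvd hn (dvd_of_mem_divisors hd),
      ← prod_primeFactors_pow_factorization_of_dvd hn (dvd_of_mem_divisors hd')]
    exact prod_congr rfl fun p hp => by rw [show d.factorization p = d'.factorization p from
      congrFun (congrFun h p) hp]
  have himage : n.divisors.image e = n.primeFactors.pi fun p => range (n.factorization p + 1) := by
    refine eq_of_subset_of_card_le (fun f hf => ?_) ?_
    · obtain ⟨d, hd, rfl⟩ := mem_image.1 hf
      refine mem_pi.2 fun p _ => mem_range_succ_iff.2 ?_
      exact (factorization_le_iff_dvd (pos_of_mem_divisors hd).ne' hn).2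
        (dvd_of_mem_divisors hd) p
    · rw [Finset.card_image_of_injOn he, Finset.card_pi, card_divisors hn]
      simp
  rw [prod_sum, ← himage, sum_image he]
  exact sum_congr rfl fun d _ => (prod_attach n.primeFactors fun p => g p (d.factorization p)).symm

theorem choose_succ_le_choose_of_le_two_mul {n m : ℕ} (h : n ≤ 2 * m) :
    n.choose (m + 1) ≤ n.choose m := by
  refine le_of_mul_le_mul_right ?_ m.succ_pos
  rw [choose_succ_right_eq]
  exact Nat.mul_le_mul_left _ (by omega)

theorem two_pow_card_primeFactors_le_card_divisors {n : ℕ} (hn : n ≠ 0) :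
    2 ^ #n.primeFactors ≤ #n.divisors := by
  rw [card_divisors hn, ← prod_const]
  refine prod_le_prod' fun p hp => ?_
  have := (prime_of_mem_primeFactors hp).factorization_pos_of_dvd hn
    (dvd_of_mem_primeFactors hp)
  omega

end Nat

lemma chebCoeff_nonneg (j n : ℕ) : 0 ≤ chebCoeff j n := by
  unfold chebCoeff
  split_ifs
  · exact sub_nonneg.2 (Nat.cast_le.2 (Nat.choose_succ_le_choose_of_le_two_mul (by omega)))
  · exact le_rfl

lemma chebCoeff_le_choose (j n : ℕ) : chebCoeff j n ≤ n.choose ((n + j) / 2) := by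
  unfold chebCoeff
  split_ifs
  · exact sub_le_self _ (Nat.cast_nonneg _)
  · exact Nat.cast_nonneg _

lemma sum_chebCoeff_mul_pow_le {x : ℝ} (hx : 0 ≤ x) (n : ℕ) :
    ∑ j ∈ range (n + 1), chebCoeff j n * x ^ (n + j) ≤ (x ^ 2 + 1) ^ n := by
  set T := {j ∈ range (n + 1) | (n + j) % 2 = 0}
  have hT : Set.InjOn (fun j => (n + j) / 2) T := by
    intro a ha b hb hab
    simp only [T, coe_filter, mem_range, Set.mem_ofPred_eq] at ha hb hab
    omega
  calc ∑ j ∈ range (n + 1), chebCoeff j n * x ^ (n + j)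
      = ∑ j ∈ T, chebCoeff j n * x ^ (n + j) := by
        refine (sum_filter_of_ne fun j _ hj => ?_).symm
        by_contra h
        exact hj (by rw [chebCoeff, if_neg h, zero_mul])
    _ ≤ ∑ j ∈ T, (n.choose ((n + j) / 2) : ℝ) * (x ^ 2) ^ ((n + j) / 2) := by
        refine sum_le_sum fun j hj => ?_
        rw [← pow_mul, Nat.mul_div_cancel' (Nat.dvd_of_mod_eq_zero (mem_filter.1 hj).2)]
        exact mul_le_mul_of_nonneg_right (chebCoeff_le_choose j n) (by positivity)
    _ = ∑ k ∈ T.image (fun j => (n + j) / 2), (n.choose k : ℝ) * (x ^ 2) ^ k :=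
        (sum_image (f := fun k => (n.choose k : ℝ) * (x ^ 2) ^ k) hT).symm
    _ ≤ ∑ k ∈ range (n + 1), (n.choose k : ℝ) * (x ^ 2) ^ k := by
        refine sum_le_sum_of_subset_of_nonneg (fun k hk => ?_) fun k _ _ => by positivity
        simp only [T, mem_image, mem_filter, mem_range] at hk ⊢
        omega
    _ = (x ^ 2 + 1) ^ n := by
        rw [add_pow]
        simp [mul_comm]

lemma sqrt_mul_sqrt_eq_prod_primeFactors {n a b : ℕ} (hn : n ≠ 0) (ha : a ∣ n) (hb : b ∣ n) :
    √(a : ℝ) * √(b : ℝ) =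
      ∏ p ∈ n.primeFactors, √(p : ℝ) ^ (a.factorization p + b.factorization p) := by
  have hsq : (a * b : ℝ) =
      (∏ p ∈ n.primeFactors, √(p : ℝ) ^ (a.factorization p + b.factorization p)) ^ 2 := by
    simp_rw [← prod_pow, ← pow_mul, mul_comm _ 2, pow_mul, Real.sq_sqrt (Nat.cast_nonneg _),
      pow_add, prod_mul_distrib]
    exact_mod_cast congrArg₂ (· * ·) (Nat.prod_primeFactors_pow_factorization_of_dvd hn ha).symm
      (Nat.prod_primeFactors_pow_factorization_of_dvd hn hb).symm
  rw [← Real.sqrt_mul (Nat.cast_nonneg _), hsq, Real.sqrt_sq (by positivity)]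

lemma sqrt_mul_sum_chebCoeffProd_le {ℓ : ℕ} (hℓ : ℓ ≠ 0) :
    √(ℓ : ℝ) * ∑ d ∈ ℓ.divisors, chebCoeffProd ℓ d * √(d : ℝ) ≤ nuCM ℓ := by
  calc √(ℓ : ℝ) * ∑ d ∈ ℓ.divisors, chebCoeffProd ℓ d * √(d : ℝ)
      = ∑ d ∈ ℓ.divisors, ∏ p ∈ ℓ.primeFactors, chebCoeff (d.factorization p) (ℓ.factorization p)
          * √(p : ℝ) ^ (ℓ.factorization p + d.factorization p) := by
        rw [mul_sum]
        refine sum_congr rfl fun d hd => ?_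
        rw [mul_left_comm, sqrt_mul_sqrt_eq_prod_primeFactors hℓ dvd_rfl
          (Nat.dvd_of_mem_divisors hd), chebCoeffProd, ← prod_mul_distrib]
    _ = ∏ p ∈ ℓ.primeFactors, ∑ j ∈ range (ℓ.factorization p + 1),
          chebCoeff j (ℓ.factorization p) * √(p : ℝ) ^ (ℓ.factorization p + j) :=
        Nat.sum_divisors_prod_primeFactors hℓ fun p j =>
          chebCoeff j (ℓ.factorization p) * √(p : ℝ) ^ (ℓ.factorization p + j)
    _ ≤ ∏ p ∈ ℓ.primeFactors, (√(p : ℝ) ^ 2 + 1) ^ ℓ.factorization p :=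
        prod_le_prod (fun p _ => sum_nonneg fun j _ => by
            have := chebCoeff_nonneg j (ℓ.factorization p); positivity)
          fun p _ => sum_chebCoeff_mul_pow_le (Real.sqrt_nonneg _) _
    _ = nuCM ℓ := by simp [nuCM, Real.sq_sqrt]

lemma div_nuCM_sq_mul_sum_chebCoeffProd_sq_le_one {ℓ : ℕ} (hℓ : ℓ ≠ 0) :
    (ℓ : ℝ) / (nuCM ℓ : ℝ) ^ 2 * (∑ d ∈ ℓ.divisors, chebCoeffProd ℓ d * √(d : ℝ)) ^ 2 ≤ 1 := by
  have hS : 0 ≤ ∑ d ∈ ℓ.divisors, chebCoeffProd ℓ d * √(d : ℝ) :=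
    sum_nonneg fun d _ => mul_nonneg (prod_nonneg fun _ _ => chebCoeff_nonneg _ _) (by positivity)
  have hν : (0 : ℝ) < nuCM ℓ := by unfold nuCM; positivity
  rw [div_mul_eq_mul_div, div_le_one (by positivity), ← Real.sq_sqrt (Nat.cast_nonneg ℓ),
    ← mul_pow]
  exact pow_le_pow_left₀ (by positivity) (sqrt_mul_sum_chebCoeffProd_le hℓ) 2

lemma one_sub_rpow_neg_pos {ε p : ℝ} (hε : 0 < ε) (hp : 1 < p) : 0 < 1 - p ^ (-ε) :=
  sub_pos.2 (Real.rpow_lt_one_of_one_lt_of_neg hp (neg_lt_zero.2 hε))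

lemma inv_one_sub_rpow_neg_le_of_le {ε q p : ℝ} (hε : 0 < ε) (hq : 1 < q) (hqp : q ≤ p) :
    (1 - p ^ (-ε))⁻¹ ≤ (1 - q ^ (-ε))⁻¹ :=
  inv_anti₀ (one_sub_rpow_neg_pos hε hq)
    (sub_le_sub_left (Real.rpow_le_rpow_of_nonpos (by linarith) hqp (by linarith)) 1)

lemma sum_divisors_rpow_neg_le {ε : ℝ} (hε : 0 < ε) {n : ℕ} (hn : n ≠ 0) :
    ∑ d ∈ n.divisors, (d : ℝ) ^ (-ε) ≤ ∏ p ∈ n.primeFactors, (1 - (p : ℝ) ^ (-ε))⁻¹ := by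
  have hd : ∀ d ∈ n.divisors,
      (d : ℝ) ^ (-ε) = ∏ p ∈ n.primeFactors, ((p : ℝ) ^ (-ε)) ^ d.factorization p := by
    intro d hd
    conv_lhs =>
      rw [← Nat.prod_primeFactors_pow_factorization_of_dvd hn (Nat.dvd_of_mem_divisors hd)]
    push_cast
    rw [← Real.finsetProd_rpow _ _ fun p _ => by positivity]
    exact prod_congr rfl fun p _ => (Real.rpow_pow_comm (Nat.cast_nonneg p) _ _).symm
  rw [sum_congr rfl hd, Nat.sum_divisors_prod_primeFactors hn fun p j => ((p : ℝ) ^ (-ε)) ^ j]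
  refine prod_le_prod (fun p _ => sum_nonneg fun j _ => by positivity) fun p hp => ?_
  have hp : (1 : ℝ) < p := by exact_mod_cast (Nat.prime_of_mem_primeFactors hp).one_lt
  simpa using geom_sum_Ico_le_of_lt_one (m := 0) (by positivity)
    (sub_pos.1 (one_sub_rpow_neg_pos hε hp))

lemma card_filter_primeFactors_subset_le {ε : ℝ} (hε : 0 < ε) {L : ℕ} (hL : L ≠ 0) {Y : ℝ}
    (hY : 1 ≤ Y) :
    (#{ℓ ∈ Icc 1 ⌊Y⌋₊ | ℓ.primeFactors ⊆ L.primeFactors} : ℝ) ≤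
      Y ^ ε * ∏ p ∈ L.primeFactors, (1 - (p : ℝ) ^ (-ε))⁻¹ := by
  set N := ⌊Y⌋₊
  have hN : N ≠ 0 := (Nat.floor_pos.2 hY).ne'
  have hsub : {ℓ ∈ Icc 1 N | ℓ.primeFactors ⊆ L.primeFactors} ⊆ (L ^ N).divisors := by
    intro ℓ hℓ
    simp only [mem_filter, mem_Icc] at hℓ
    exact Nat.mem_divisors.2 ⟨((Nat.dvd_pow_self_iff (by omega) hL).2 hℓ.2).trans
      (pow_dvd_pow L hℓ.1.2), pow_ne_zero _ hL⟩
  calc (#{ℓ ∈ Icc 1 N | ℓ.primeFactors ⊆ L.primeFactors} : ℝ)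
      = ∑ ℓ ∈ Icc 1 N with ℓ.primeFactors ⊆ L.primeFactors, 1 := by simp
    _ ≤ ∑ ℓ ∈ Icc 1 N with ℓ.primeFactors ⊆ L.primeFactors, Y ^ ε * (ℓ : ℝ) ^ (-ε) := by
        refine sum_le_sum fun ℓ hℓ => ?_
        simp only [mem_filter, mem_Icc] at hℓ
        have hℓ0 : (0 : ℝ) < ℓ := by exact_mod_cast hℓ.1.1
        rw [Real.rpow_neg hℓ0.le, ← div_eq_mul_inv, one_le_div (Real.rpow_pos_of_pos hℓ0 ε)]
        exact Real.rpow_le_rpow hℓ0.le ((Nat.le_floor_iff (by linarith)).1 hℓ.1.2) hε.le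
    _ ≤ Y ^ ε * ∑ d ∈ (L ^ N).divisors, (d : ℝ) ^ (-ε) := by
        rw [← mul_sum]
        exact mul_le_mul_of_nonneg_left
          (sum_le_sum_of_subset_of_nonneg hsub fun d _ _ => by positivity) (by positivity)
    _ ≤ Y ^ ε * ∏ p ∈ L.primeFactors, (1 - (p : ℝ) ^ (-ε))⁻¹ := by
        rw [← Nat.primeFactors_pow L hN]
        gcongr
        exact sum_divisors_rpow_neg_le hε (pow_ne_zero _ hL)

lemma prod_inv_one_sub_rpow_neg_le {ε : ℝ} (hε : 0 < ε) {P : Finset ℕ} (hP : ∀ p ∈ P, 2 ≤ p) :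
    ∏ p ∈ P, (1 - (p : ℝ) ^ (-ε))⁻¹ ≤
      (1 - (2 : ℝ) ^ (-ε))⁻¹ ^ ⌈(2 : ℝ) ^ ε⁻¹⌉₊ * 2 ^ #P := by
  set B := ⌈(2 : ℝ) ^ ε⁻¹⌉₊
  have hP1 : ∀ p ∈ P, (1 : ℝ) < p := fun p hp => by exact_mod_cast hP p hp
  have hf : ∀ p ∈ P, 0 ≤ (1 - (p : ℝ) ^ (-ε))⁻¹ := fun p hp =>
    (inv_pos.2 (one_sub_rpow_neg_pos hε (hP1 p hp))).le
  have hK : 1 ≤ (1 - (2 : ℝ) ^ (-ε))⁻¹ := (one_le_inv₀ (one_sub_rpow_neg_pos hε one_lt_two)).2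
    (sub_le_self _ (Real.rpow_nonneg zero_le_two _))
  rw [← prod_filter_mul_prod_filter_not P (· < B)]
  gcongr ?_ * ?_
  · exact prod_nonneg fun p hp => hf p (mem_filter.1 hp).1
  · calc ∏ p ∈ P with p < B, (1 - (p : ℝ) ^ (-ε))⁻¹
        ≤ ∏ p ∈ P with p < B, (1 - (2 : ℝ) ^ (-ε))⁻¹ :=
          prod_le_prod (fun p hp => hf p (mem_filter.1 hp).1) fun p hp =>
            inv_one_sub_rpow_neg_le_of_le hε one_lt_two (by exact_mod_cast hP p (mem_filter.1 hp).1)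
      _ ≤ (1 - (2 : ℝ) ^ (-ε))⁻¹ ^ B := by
          rw [prod_const]
          refine pow_le_pow_right₀ hK ?_
          simpa using card_le_card (s := {p ∈ P | p < B}) (t := range B)
            fun p hp => mem_range.2 (mem_filter.1 hp).2
  · calc ∏ p ∈ P with ¬p < B, (1 - (p : ℝ) ^ (-ε))⁻¹
        ≤ ∏ p ∈ P with ¬p < B, (1 - ((2 : ℝ) ^ ε⁻¹) ^ (-ε))⁻¹ :=
          prod_le_prod (fun p hp => hf p (mem_filter.1 hp).1) fun p hp =>
            inv_one_sub_rpow_neg_le_of_le hε (Real.one_lt_rpow one_lt_two (inv_pos.2 hε))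
              ((Nat.ceil_le.1 (not_lt.1 (mem_filter.1 hp).2)))
      _ = 2 ^ #{p ∈ P | ¬p < B} := by
          rw [prod_const, Real.rpow_neg (by positivity), Real.rpow_inv_rpow zero_le_two hε.ne']
          norm_num
      _ ≤ 2 ^ #P := pow_le_pow_right₀ one_le_two (card_filter_le _ _)

/-- For every `ε > 0` there is `C = C(ε) > 0` such that for every positive
integer `L` and every real `Y ≥ 1`,
`∑_{ℓ ≤ Y, ℓ ∣ L^∞} (ℓ / ν(ℓ)²) (∑_{d ∣ ℓ} c_ℓ(d) √d)² ≤ C · Y^ε · τ(L)`,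
where the outer sum is over positive integers `ℓ ≤ Y` all of whose prime factors divide
`L`, and `τ(L)` is the number of divisors of `L`. -/
theorem stmt10 (ε : ℝ) (hε : 0 < ε) :
    ∃ C : ℝ, 0 < C ∧ ∀ L : ℕ, 0 < L → ∀ Y : ℝ, 1 ≤ Y →
      ∑ ℓ ∈ (Finset.Icc 1 ⌊Y⌋₊).filter (fun ℓ => ℓ.primeFactors ⊆ L.primeFactors),
        ((ℓ : ℝ) / (nuCM ℓ : ℝ) ^ 2) *
          (∑ d ∈ ℓ.divisors, chebCoeffProd ℓ d * Real.sqrt d) ^ 2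
        ≤ C * Y ^ ε * (L.divisors.card : ℝ) := by
  set K := (1 - (2 : ℝ) ^ (-ε))⁻¹
  have hK : 0 < K := inv_pos.2 (one_sub_rpow_neg_pos hε one_lt_two)
  refine ⟨K ^ ⌈(2 : ℝ) ^ ε⁻¹⌉₊, pow_pos hK _, fun L hL Y hY => ?_⟩
  calc _ ≤ ∑ ℓ ∈ Icc 1 ⌊Y⌋₊ with ℓ.primeFactors ⊆ L.primeFactors, (1 : ℝ) :=
        sum_le_sum fun ℓ hℓ => div_nuCM_sq_mul_sum_chebCoeffProd_sq_le_one
          (Nat.one_le_iff_ne_zero.1 (mem_Icc.1 (mem_filter.1 hℓ).1).1)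
    _ = #{ℓ ∈ Icc 1 ⌊Y⌋₊ | ℓ.primeFactors ⊆ L.primeFactors} := by simp
    _ ≤ Y ^ ε * ∏ p ∈ L.primeFactors, (1 - (p : ℝ) ^ (-ε))⁻¹ :=
        card_filter_primeFactors_subset_le hε hL.ne' hY
    _ ≤ Y ^ ε * (K ^ ⌈(2 : ℝ) ^ ε⁻¹⌉₊ * 2 ^ #L.primeFactors) := by
        gcongr
        exact prod_inv_one_sub_rpow_neg_le hε fun p hp => (Nat.prime_of_mem_primeFactors hp).two_le
    _ ≤ K ^ ⌈(2 : ℝ) ^ ε⁻¹⌉₊ * Y ^ ε * #L.divisors := by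
        rw [mul_left_comm, ← mul_assoc]
        refine mul_le_mul_of_nonneg_left ?_ (mul_nonneg (pow_pos hK _).le (by positivity))
        exact_mod_cast Nat.two_pow_card_primeFactors_le_card_divisors hL.ne'
end

section
/- For every positive integer ℓ, Σ_{d | ℓ} c_ℓ(d) ≤ ν(ℓ) · ℓ^{−log(3/2)/log 2}; equivalently, (Σ_{d | ℓ} c_ℓ(d)) / ν(ℓ) ≤ ℓ^{−0.5849…}. -/
open Finset Real

theorem Finset.sum_finsupp_prod_eq_prod_sum {ι α R : Type*} [Zero α] [CommSemiring R]
    (s : Finset ι) (t : ι → Finset α) (f : ι → α → R) :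
    ∑ g ∈ s.finsupp t, ∏ i ∈ s, f i (g i) = ∏ i ∈ s, ∑ a ∈ t i, f i a := by
  classical
  rw [prod_sum, Finset.finsupp, sum_map]
  refine sum_congr rfl fun x _ => ?_
  rw [← prod_attach s]
  refine prod_congr rfl fun i _ => ?_
  simp [Finsupp.indicator_of_mem i.2]

theorem Nat.sum_divisors_prod_factorization {R : Type*} [CommSemiring R] (f : ℕ → ℕ → R)
    {n : ℕ} (hn : n ≠ 0) :
    ∑ d ∈ n.divisors, ∏ p ∈ n.primeFactors, f p (d.factorization p) =
      ∏ p ∈ n.primeFactors, ∑ k ∈ range (n.factorization p + 1), f p k := by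
  have hfactorization : ∀ g ∈ Iic n.factorization, (g.prod (· ^ ·)).factorization = g :=
    fun g hg => Nat.factorization_prod_pow_eq_self_of_le_factorization (mem_Iic.mp hg)
  rw [Nat.divisors_eq_image_Iic_factorization_prod_pow hn, sum_image fun g hg h hh e => by
      rw [← hfactorization g hg, ← hfactorization h hh, e],
    sum_congr rfl fun g hg => by rw [hfactorization g hg],
    Iic_eq_Icc, Finsupp.Icc_eq, bot_eq_zero, Finsupp.support_zero, empty_union,
    Nat.support_factorization, sum_finsupp_prod_eq_prod_sum]
  refine prod_congr rfl fun p _ => ?_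
  rw [Finsupp.coe_rangeIcc, Finsupp.coe_zero, Pi.zero_apply, ← Nat.range_succ_eq_Icc_zero]

theorem Nat.cast_rpow_eq_prod_primeFactors {n : ℕ} (hn : n ≠ 0) (r : ℝ) :
    (n : ℝ) ^ r = ∏ p ∈ n.primeFactors, ((p : ℝ) ^ r) ^ n.factorization p := by
  conv_lhs => rw [← Nat.prod_factorization_pow_eq_self hn]
  rw [Nat.cast_finsuppProd, Finsupp.prod, Nat.support_factorization,
    ← finsetProd_rpow _ _ fun p _ => by positivity]
  refine prod_congr rfl fun p _ => ?_
  push_cast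
  rw [← rpow_natCast, ← rpow_natCast, ← rpow_mul, ← rpow_mul, mul_comm] <;> positivity

theorem sum_chebCoeff_eq_choose (n : ℕ) :
    ∑ j ∈ range (n + 1), chebCoeff j n = n.choose ((n + 1) / 2) := by
  have hparity : (range (n + 1)).filter (fun j => (n + j) % 2 = 0) =
      (range (n / 2 + 1)).image (fun i => n - 2 * i) := by
    ext j
    simp only [mem_filter, mem_range, mem_image]
    exact ⟨fun ⟨_, _⟩ => ⟨(n - j) / 2, by omega, by omega⟩, by rintro ⟨i, _, rfl⟩; omega⟩
  simp only [chebCoeff]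
  rw [← sum_filter, hparity, sum_image fun a ha b hb h => by
    simp only [coe_range, Set.mem_Iio] at ha hb h; omega]
  -- with `j = n - 2 i` the sum telescopes
  rw [sum_congr rfl fun i hi => by
    rw [show (n + (n - 2 * i)) / 2 = n + 1 - (i + 1) by rw [mem_range] at hi; omega,
      show n + 1 - (i + 1) + 1 = n + 1 - i by rw [mem_range] at hi; omega],
    sum_range_sub (fun i => (n.choose (n + 1 - i) : ℝ)),
    show n + 1 - (n / 2 + 1) = (n + 1) / 2 by omega]
  simp

theorem sum_divisors_chebCoeffProd {ℓ : ℕ} (hℓ : ℓ ≠ 0) :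
    ∑ d ∈ ℓ.divisors, chebCoeffProd ℓ d =
      ∏ p ∈ ℓ.primeFactors, ((ℓ.factorization p).choose ((ℓ.factorization p + 1) / 2) : ℝ) := by
  rw [← prod_congr rfl fun p _ => sum_chebCoeff_eq_choose (ℓ.factorization p)]
  exact Nat.sum_divisors_prod_factorization (fun p j => chebCoeff j (ℓ.factorization p)) hℓ

theorem nuCM_mul_rpow {ℓ : ℕ} (hℓ : ℓ ≠ 0) (r : ℝ) :
    (nuCM ℓ : ℝ) * (ℓ : ℝ) ^ r =
      ∏ p ∈ ℓ.primeFactors, (((p : ℝ) + 1) * (p : ℝ) ^ r) ^ ℓ.factorization p := by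
  simp only [nuCM, Nat.cast_rpow_eq_prod_primeFactors hℓ, mul_pow, prod_mul_distrib]
  push_cast
  rfl

theorem log_three_halves_div_log_two_le : log (3 / 2) / log 2 ≤ 2 / 3 := by
  have h := log_le_log (by norm_num) (show (3 / 2 : ℝ) ^ 3 ≤ 2 ^ 2 by norm_num)
  rw [log_pow, log_pow] at h
  rw [div_le_iff₀ (log_pos one_lt_two)]
  push_cast at h
  linarith

theorem two_le_add_one_mul_rpow_neg {x : ℝ} (hx : 2 ≤ x) :
    2 ≤ (x + 1) * x ^ (-(log (3 / 2) / log 2)) := by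
  have htwo : (2 : ℝ) ^ (log (3 / 2) / log 2) = 3 / 2 := by
    rw [log_div_log, rpow_logb two_pos one_lt_two.ne' (by norm_num)]
  set α := log (3 / 2) / log 2
  have hα : 0 ≤ α := div_nonneg (log_nonneg (by norm_num)) (log_nonneg one_le_two)
  have hsplit : x ^ α = 3 / 2 * (1 + (x / 2 - 1)) ^ α := by
    rw [add_sub_cancel, ← htwo, ← mul_rpow zero_le_two (by linarith),
      mul_div_cancel₀ x two_ne_zero]
  have hbernoulli : (1 + (x / 2 - 1)) ^ α ≤ 1 + α * (x / 2 - 1) :=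
    rpow_one_add_le_one_add_mul_self (by linarith) hα
      (by linarith [log_three_halves_div_log_two_le])
  rw [rpow_neg (by linarith), ← div_eq_mul_inv, le_div_iff₀ (by positivity)]
  nlinarith [log_three_halves_div_log_two_le]

/-- For every positive integer `ℓ`,
`∑_{d ∣ ℓ} c_ℓ(d) ≤ ν(ℓ) · ℓ^{-log(3/2)/log 2}`; equivalently,
`(∑_{d ∣ ℓ} c_ℓ(d)) / ν(ℓ) ≤ ℓ^{-0.5849…}`. -/
theorem stmt11 (ℓ : ℕ) (hℓ : 0 < ℓ) :
    ∑ d ∈ ℓ.divisors, chebCoeffProd ℓ d ≤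
      (nuCM ℓ : ℝ) * (ℓ : ℝ) ^ (-(Real.log (3 / 2) / Real.log 2)) := by
  rw [sum_divisors_chebCoeffProd hℓ.ne', nuCM_mul_rpow hℓ.ne']
  refine prod_le_prod (fun _ _ => by positivity) fun p hp => ?_
  have hp2 : (2 : ℝ) ≤ p := by exact_mod_cast (Nat.prime_of_mem_primeFactors hp).two_le
  calc ((ℓ.factorization p).choose ((ℓ.factorization p + 1) / 2) : ℝ)
      ≤ 2 ^ ℓ.factorization p := by exact_mod_cast Nat.choose_le_two_pow _ _
    _ ≤ _ := pow_le_pow_left₀ zero_le_two (two_le_add_one_mul_rpow_neg hp2) _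
end
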